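/- arXiv:1512.03472 — 4 statements merged into one kernel-verified Lean document; each statement's English description precedes it below -/
import Mathlib

section
/- For all n ≥ 7, the independence number of G_n satisfies α(G_n) ≥ 6n − 28. -/
/-!
Write `n = 6 + m`, splitting the coordinates into a head of six and a tail of `m`. Take the `6m`
vectors `(e_a - e_b) + s • f_j`, where `e_a - e_b` runs over the oriented edges of the triangles
`{0,1,2}` and `{3,4,5}` of the head, the tail sign is `s = 1` on the first triangle and `s = -1`
on the second, and `f_j` is a unit vector of the tail; add the `8` vectors supported on one
triangle with entries `±1` whose product is `1`. Two distinct such vectors have scalar product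
`≤ 0` or `= 2`: two edges of one triangle have head product `-1`, which a shared tail coordinate
only raises to `0`; edges of different triangles have orthogonal heads and opposite signs; an
edge `e_a - e_b` meets a full vector `x` in `x_a - x_b ∈ {0, ±2}`; two full vectors on one
triangle differ in exactly two entries. Since every vertex has scalar square `3`, the vectors are
distinct, so they form an independent set of size `6m + 8 = 6n - 28`.
-/

/-- The vertex set of the graph `G_n`: vectors in `{-1,0,1}^n` with exactly three
nonzero coordinates. -/
def Gvert (n : ℕ) : Type :=
  {v : Fin n → ℤ // (∀ i, v i = -1 ∨ v i = 0 ∨ v i = 1) ∧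
    (Finset.univ.filter (fun i => v i ≠ 0)).card = 3}

/-- The graph `G_n`: two such vectors are adjacent iff their scalar product is `1`. -/
def G (n : ℕ) : SimpleGraph (Gvert n) where
  Adj u v := u ≠ v ∧ ∑ i, u.1 i * v.1 i = 1
  symm := by
    constructor
    rintro u v ⟨h1, h2⟩
    exact ⟨h1.symm, (Finset.sum_congr rfl fun i _ => mul_comm _ _).trans h2⟩
  loopless := by constructor; rintro u ⟨h1, -⟩; exact h1 rfl

/-- A set of vertices is independent if no two of its members are adjacent. -/
def IsIndep {V : Type*} (H : SimpleGraph V) (s : Set V) : Prop :=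
  s.Pairwise fun u v => ¬ H.Adj u v

/-- The constant `c(n)` from the paper. -/
def c (n : ℕ) : ℕ := if n % 4 = 0 then 0 else if n % 4 = 1 then 1 else 2

open Finset

theorem Fin.append_dotProduct_append {α : Type*} [Mul α] [AddCommMonoid α] {a b : ℕ}
    (u u' : Fin a → α) (v v' : Fin b → α) :
    Fin.append u v ⬝ᵥ Fin.append u' v' = u ⬝ᵥ u' + v ⬝ᵥ v' := by
  simp [dotProduct, Fin.sum_univ_add]

theorem Fin.card_filter_append_ne_zero {M : Type*} [Zero M] [DecidableEq M] {a b : ℕ}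
    (u : Fin a → M) (v : Fin b → M) :
    #{i | Fin.append u v i ≠ 0} = #{i | u i ≠ 0} + #{i | v i ≠ 0} := by
  simp only [card_filter, Fin.sum_univ_add, Fin.append_left, Fin.append_right]

theorem Pi.card_filter_single_ne_zero {ι M : Type*} [Fintype ι] [DecidableEq ι] [Zero M]
    [DecidableEq M] (j : ι) {s : M} (hs : s ≠ 0) :
    #{i | (Pi.single j s : ι → M) i ≠ 0} = 1 := by
  rw [card_eq_one]
  exact ⟨j, by ext i; by_cases h : i = j <;> simp [h, hs]⟩

theorem Gvert.dotProduct_self {n : ℕ} (v : Gvert n) : v.1 ⬝ᵥ v.1 = 3 := by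
  have hsq : ∀ i, v.1 i * v.1 i = if v.1 i ≠ 0 then 1 else 0 := fun i => by
    rcases v.2.1 i with h | h | h <;> simp [h]
  rw [dotProduct, sum_congr rfl fun i _ => hsq i]
  exact_mod_cast (card_filter _ _).symm.trans v.2.2

def Gvert.ofAppend {a b : ℕ} (u : Fin a → ℤ) (v : Fin b → ℤ)
    (hu : ∀ i, u i = -1 ∨ u i = 0 ∨ u i = 1) (hv : ∀ i, v i = -1 ∨ v i = 0 ∨ v i = 1)
    (hcard : #{i | u i ≠ 0} + #{i | v i ≠ 0} = 3) : Gvert (a + b) :=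
  ⟨Fin.append u v, Fin.forall_fin_add _ |>.2 ⟨by simpa using hu, by simpa using hv⟩,
    by rw [Fin.card_filter_append_ne_zero, hcard]⟩

theorem exists_isIndep_card_eq {n : ℕ} {ι : Type*} [Fintype ι] (f : ι → Gvert n)
    (hf : Pairwise fun x y => (f x).1 ⬝ᵥ (f y).1 ≠ 1 ∧ (f x).1 ⬝ᵥ (f y).1 ≠ 3) :
    ∃ S : Finset (Gvert n), IsIndep (G n) ↑S ∧ #S = Fintype.card ι := by
  classical
  have hinj : Function.Injective f := fun x y hxy => by
    by_contra hne
    exact (hf hne).2 (hxy ▸ (f x).dotProduct_self)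
  refine ⟨univ.image f, ?_, by rw [card_image_of_injective _ hinj, card_univ]⟩
  rintro _ hu _ hv huv ⟨-, hadj⟩
  obtain ⟨x, -, rfl⟩ := mem_image.1 hu
  obtain ⟨y, -, rfl⟩ := mem_image.1 hv
  exact (hf fun h => huv (congrArg f h)).1 hadj

def edgeHead : Fin 6 → Fin 6 → ℤ :=
  ![![1, -1, 0, 0, 0, 0], ![0, 1, -1, 0, 0, 0], ![-1, 0, 1, 0, 0, 0],
    ![0, 0, 0, 1, -1, 0], ![0, 0, 0, 0, 1, -1], ![0, 0, 0, -1, 0, 1]]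

def edgeSign : Fin 6 → ℤ := ![1, 1, 1, -1, -1, -1]

def fullHead : Fin 8 → Fin 6 → ℤ :=
  ![![1, 1, 1, 0, 0, 0], ![1, -1, -1, 0, 0, 0], ![-1, 1, -1, 0, 0, 0], ![-1, -1, 1, 0, 0, 0],
    ![0, 0, 0, 1, 1, 1], ![0, 0, 0, 1, -1, -1], ![0, 0, 0, -1, 1, -1], ![0, 0, 0, -1, -1, 1]]

theorem edgeHead_mem : ∀ k i, edgeHead k i = -1 ∨ edgeHead k i = 0 ∨ edgeHead k i = 1 := by
  decide

theorem fullHead_mem : ∀ e i, fullHead e i = -1 ∨ fullHead e i = 0 ∨ fullHead e i = 1 := by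
  decide

theorem edgeSign_mem : ∀ k, edgeSign k = -1 ∨ edgeSign k = 1 := by decide

theorem card_edgeHead_ne_zero : ∀ k, #{i | edgeHead k i ≠ 0} = 2 := by decide

theorem card_fullHead_ne_zero : ∀ e, #{i | fullHead e i ≠ 0} = 3 := by decide

theorem edgeHead_dotProduct_self : ∀ k, edgeHead k ⬝ᵥ edgeHead k = 2 := by decide

theorem edgeHead_dotProduct_nonpos : ∀ k k', k ≠ k' →
    edgeHead k ⬝ᵥ edgeHead k' ≤ 0 ∧
      edgeHead k ⬝ᵥ edgeHead k' + edgeSign k * edgeSign k' ≤ 0 := by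
  decide

theorem edgeHead_dotProduct_fullHead : ∀ k e,
    edgeHead k ⬝ᵥ fullHead e ≤ 0 ∨ edgeHead k ⬝ᵥ fullHead e = 2 := by
  decide

theorem fullHead_dotProduct_nonpos : ∀ e e', e ≠ e' → fullHead e ⬝ᵥ fullHead e' ≤ 0 := by
  decide

def indepVertex (m : ℕ) : Fin 6 × Fin m ⊕ Fin 8 → Gvert (6 + m)
  | .inl (k, j) => .ofAppend (edgeHead k) (Pi.single j (edgeSign k)) (edgeHead_mem k)
      (fun i => by rcases edgeSign_mem k with h | h <;> by_cases hi : i = j <;> simp [hi, h])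
      (by rw [card_edgeHead_ne_zero, Pi.card_filter_single_ne_zero]
          rcases edgeSign_mem k with h | h <;> simp [h])
  | .inr e => .ofAppend (fullHead e) 0 (fullHead_mem e) (by simp)
      (by simp [card_fullHead_ne_zero])

theorem indepVertex_dotProduct {m : ℕ} {x y : Fin 6 × Fin m ⊕ Fin 8} (hxy : x ≠ y) :
    (indepVertex m x).1 ⬝ᵥ (indepVertex m y).1 ≤ 0 ∨
      (indepVertex m x).1 ⬝ᵥ (indepVertex m y).1 = 2 := by
  rcases x with ⟨k, j⟩ | e <;> rcases y with ⟨k', j'⟩ | e' <;>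
    simp only [indepVertex, Gvert.ofAppend, Fin.append_dotProduct_append, single_dotProduct,
      dotProduct_zero, zero_dotProduct, add_zero, Pi.single_apply]
  · obtain rfl | hk := eq_or_ne k k'
    · have hj : j ≠ j' := fun h => hxy (h ▸ rfl)
      simp [hj, edgeHead_dotProduct_self]
    · obtain ⟨hhead, hsum⟩ := edgeHead_dotProduct_nonpos k k' hk
      split_ifs
      · exact .inl (by simpa using hsum)
      · exact .inl (by simpa using hhead)
  · exact edgeHead_dotProduct_fullHead k e'
  · rw [dotProduct_comm]; exact edgeHead_dotProduct_fullHead k' e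
  · exact .inl (fullHead_dotProduct_nonpos e e' fun h => hxy (h ▸ rfl))

/-- For all `n ≥ 7`, the independence number of `G_n` is at least `6n - 28`. -/
theorem alpha_ge_cobras (n : ℕ) (hn : 7 ≤ n) :
    ∃ S : Finset (Gvert n), IsIndep (G n) ↑S ∧ 6 * n - 28 ≤ S.card := by
  obtain ⟨m, rfl⟩ : ∃ m, n = 6 + m := ⟨n - 6, by omega⟩
  obtain ⟨S, hS, hcard⟩ := exists_isIndep_card_eq (indepVertex m) fun x y hxy => by
    rcases indepVertex_dotProduct hxy with h | h <;> omega
  refine ⟨S, hS, ?_⟩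
  simp only [hcard, Fintype.card_sum, Fintype.card_prod, Fintype.card_fin]
  omega
end

section
/- Nagy's lemma: Let G'_n be the graph whose vertices are all vectors in {0,1}^n with exactly three coordinates equal to 1, with edges between pairs of vectors having scalar product 1. With c(n) = 0, 1, 2, 2 according to n ≡ 0, 1, 2, 3 (mod 4), the independence number of G'_n equals n − c(n). -/
/-- Vertices of Nagy's graph `G'_n`: vectors in `{0,1}^n` with exactly three
coordinates equal to `1`. -/
def NagyVert (n : ℕ) : Type :=
  {v : Fin n → ℤ // (∀ i, v i = 0 ∨ v i = 1) ∧
    (Finset.univ.filter (fun i => v i ≠ 0)).card = 3}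

/-- Nagy's graph `G'_n`: adjacency is scalar product `1`. -/
def NagyG (n : ℕ) : SimpleGraph (NagyVert n) where
  Adj u v := u ≠ v ∧ ∑ i, u.1 i * v.1 i = 1
  symm := by
    constructor
    rintro u v ⟨h1, h2⟩
    exact ⟨h1.symm, (Finset.sum_congr rfl fun i _ => mul_comm _ _).trans h2⟩
  loopless := by constructor; rintro u ⟨h1, -⟩; exact h1 rfl

/-!
Identify a vertex with its support, a 3-subset of `Fin n`; a set of vertices is independent iff
no two supports share exactly one point. In such a family of 3-sets, "sharing a point" is an
equivalence relation (two 2-subsets of a 3-set meet), and two distinct sets of one class share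
exactly two points. Such a class is either a sunflower with a two-point kernel, so that `k` sets
span at least `k + 2` points, or consists of 3-subsets of a single 4-set. As `c ≤ 2` and
`c (m + 4) = c m`, splitting off one class at a time gives `|F| + c |S| ≤ |S|`. Conversely,
all 3-subsets of disjoint blocks of four points, plus the three leftover points when
`n ≡ 3 [MOD 4]`, form an independent family of size `n - c n`.
-/

open Finset

lemma c_le_self (m : ℕ) : c m ≤ m := by
  unfold c; split_ifs <;> omega

lemma c_le_two (m : ℕ) : c m ≤ 2 := by
  unfold c; split_ifs <;> omega

lemma c_add_four (m : ℕ) : c (m + 4) = c m := by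
  simp [c, Nat.add_mod_right]

section Triples

variable {α : Type*} [DecidableEq α]

lemma card_inter_eq_two {A B : Finset α} (hA : #A = 3) (hB : #B = 3) (hAB : A ≠ B)
    (h1 : #(A ∩ B) ≠ 1) (hne : (A ∩ B).Nonempty) : #(A ∩ B) = 2 := by
  have hlt : #(A ∩ B) < 3 := by
    refine hA ▸ card_lt_card (inter_subset_left.ssubset_of_ne fun h => hAB ?_)
    exact eq_of_subset_of_card_le (h ▸ inter_subset_right) (by rw [hA, hB])
  have := hne.card_pos
  omega

lemma inter_nonempty_trans {F : Finset (Finset α)} (h3 : ∀ A ∈ F, #A = 3)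
    (h1 : (F : Set (Finset α)).Pairwise fun A B => #(A ∩ B) ≠ 1) {A B D : Finset α}
    (hA : A ∈ F) (hB : B ∈ F) (hD : D ∈ F) (hAB : (A ∩ B).Nonempty)
    (hBD : (B ∩ D).Nonempty) : (A ∩ D).Nonempty := by
  obtain rfl | hAB' := eq_or_ne A B
  · exact hBD
  obtain rfl | hBD' := eq_or_ne B D
  · exact hAB
  have hAB2 := card_inter_eq_two (h3 A hA) (h3 B hB) hAB' (h1 hA hB hAB') hAB
  have hBD2 := card_inter_eq_two (h3 B hB) (h3 D hD) hBD' (h1 hB hD hBD') hBD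
  have hmeet : (A ∩ B ∩ (B ∩ D)).Nonempty :=
    inter_nonempty_of_card_lt_card_add_card inter_subset_right inter_subset_left
      (by rw [h3 B hB]; omega)
  exact hmeet.mono (inter_subset_inter inter_subset_left inter_subset_right)

lemma inter_subset_or_subset_union {A B D : Finset α} (hD : #D = 3) (hAB : #(A ∩ B) = 2)
    (hDA : #(D ∩ A) = 2) (hDB : #(D ∩ B) = 2) : A ∩ B ⊆ D ∨ D ⊆ A ∪ B := by
  have hsplit : #(D ∩ (A ∪ B)) + #(D ∩ (A ∩ B)) = 4 := by
    rw [inter_union_distrib_left, inter_inter_distrib_left, card_union_add_card_inter, hDA, hDB]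
  have hle3 : #(D ∩ (A ∪ B)) ≤ 3 := hD ▸ card_le_card inter_subset_left
  have hle2 : #(D ∩ (A ∩ B)) ≤ 2 := hAB ▸ card_le_card inter_subset_right
  by_cases hP : #(D ∩ (A ∩ B)) = 2
  · exact Or.inl (inter_eq_right.1 (eq_of_subset_of_card_le inter_subset_right (by omega)))
  · exact Or.inr (inter_eq_left.1 (eq_of_subset_of_card_le inter_subset_left (by omega)))

lemma card_add_le_card_sup_of_forall_subset {C : Finset (Finset α)} {P : Finset α}
    (hC : C.Nonempty) (hP : ∀ D ∈ C, P ⊆ D ∧ #D = #P + 1) : #C + #P ≤ #(C.sup id) := by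
  obtain ⟨D₀, hD₀⟩ := hC
  have hPU : P ⊆ C.sup id := (hP D₀ hD₀).1.trans (le_sup (f := id) hD₀)
  have hmaps : Set.MapsTo (· \ P) C ((C.sup id \ P).powersetCard 1) := fun D hD =>
    mem_powersetCard.2 ⟨sdiff_subset_sdiff (le_sup (f := id) hD) subset_rfl, by
      rw [card_sdiff_of_subset (hP D hD).1, (hP D hD).2, Nat.add_sub_cancel_left]⟩
  have hinj : Set.InjOn (· \ P) C := fun D hD E hE h => by
    rw [← sdiff_union_of_subset (hP D hD).1, ← sdiff_union_of_subset (hP E hE).1]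
    exact congrArg (· ∪ P) h
  have hcard := card_le_card_of_injOn _ hmaps hinj
  rw [card_powersetCard, Nat.choose_one_right, card_sdiff_of_subset hPU] at hcard
  have := card_le_card hPU
  omega

lemma subset_union_of_not_inter_subset {C : Finset (Finset α)} (h3 : ∀ D ∈ C, #D = 3)
    (h2 : (C : Set (Finset α)).Pairwise fun X Y => #(X ∩ Y) = 2) {A B D₀ : Finset α}
    (hA : A ∈ C) (hB : B ∈ C) (hD₀ : D₀ ∈ C) (hAB : A ≠ B) (hP : ¬ A ∩ B ⊆ D₀) :
    ∀ D ∈ C, D ⊆ A ∪ B := by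
  have hdich : ∀ D ∈ C, A ∩ B ⊆ D ∨ D ⊆ A ∪ B := by
    intro D hD
    obtain rfl | hDA := eq_or_ne D A
    · exact Or.inr subset_union_left
    obtain rfl | hDB := eq_or_ne D B
    · exact Or.inr subset_union_right
    exact inter_subset_or_subset_union (h3 D hD) (h2 hA hB hAB) (h2 hD hA hDA) (h2 hD hB hDB)
  have hD₀U : D₀ ⊆ A ∪ B := (hdich D₀ hD₀).resolve_left hP
  intro D hD
  refine (hdich D hD).elim (fun hPD => ?_) id
  by_contra hDU
  -- `D` meets `A ∪ B ⊇ D₀` only in `A ∩ B`, so its two points in common with `D₀` lie there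
  have hDU' : A ∩ B = D ∩ (A ∪ B) := by
    refine eq_of_subset_of_card_le (subset_inter hPD inter_subset_union) ?_
    have := card_lt_card (inter_subset_left.ssubset_of_ne fun h => hDU (inter_eq_left.1 h))
    rw [h3 D hD] at this
    rw [h2 hA hB hAB]
    omega
  have hsub : D ∩ D₀ ⊆ A ∩ B ∩ D₀ := fun x hx => by
    rw [mem_inter] at hx ⊢
    exact ⟨hDU' ▸ mem_inter.2 ⟨hx.1, hD₀U hx.2⟩, hx.2⟩
  have hcard := card_le_card hsub
  rw [h2 hD hD₀ fun h => hP (h ▸ hPD)] at hcard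
  exact hP (inter_eq_left.1
    (eq_of_subset_of_card_le inter_subset_left (by rw [h2 hA hB hAB]; exact hcard)))

lemma card_add_two_le_card_sup_or_card_sup_eq_four {C : Finset (Finset α)} (hC : C.Nonempty)
    (h3 : ∀ D ∈ C, #D = 3) (h2 : (C : Set (Finset α)).Pairwise fun X Y => #(X ∩ Y) = 2) :
    #C + 2 ≤ #(C.sup id) ∨ (#(C.sup id) = 4 ∧ #C ≤ 4) := by
  obtain hC1 | hC1 := le_or_gt #C 1
  · obtain ⟨A, rfl⟩ := card_eq_one.1 (le_antisymm hC1 hC.card_pos)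
    simp [h3 A (mem_singleton_self A)]
  obtain ⟨A, hA, B, hB, hAB⟩ := one_lt_card.1 hC1
  by_cases hsun : ∀ D ∈ C, A ∩ B ⊆ D
  · left
    simpa [h2 hA hB hAB] using card_add_le_card_sup_of_forall_subset hC
      fun D hD => ⟨hsun D hD, by rw [h3 D hD, h2 hA hB hAB]⟩
  obtain ⟨D₀, hD₀, hP⟩ := not_forall₂.1 hsun
  have hsub := subset_union_of_not_inter_subset h3 h2 hA hB hD₀ hAB hP
  have hU : C.sup id = A ∪ B :=
    le_antisymm (Finset.sup_le hsub) (union_subset (le_sup (f := id) hA) (le_sup (f := id) hB))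
  have hAB4 : #(A ∪ B) = 4 := by
    have := card_union_add_card_inter A B
    rw [h3 A hA, h3 B hB, h2 hA hB hAB] at this
    omega
  refine Or.inr ⟨hU ▸ hAB4, ?_⟩
  calc #C ≤ #((A ∪ B).powersetCard 3) :=
        card_le_card fun D hD => mem_powersetCard.2 ⟨hsub D hD, h3 D hD⟩
    _ = 4 := by rw [card_powersetCard, hAB4]; rfl

lemma pairwise_card_inter_eq_two_filter {F : Finset (Finset α)} (h3 : ∀ A ∈ F, #A = 3)
    (h1 : (F : Set (Finset α)).Pairwise fun A B => #(A ∩ B) ≠ 1) {A : Finset α} (hA : A ∈ F) :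
    ((F.filter fun B => (A ∩ B).Nonempty : Finset (Finset α)) : Set (Finset α)).Pairwise
      fun X Y => #(X ∩ Y) = 2 := by
  intro X hX Y hY hXY
  obtain ⟨hXF, hAX⟩ := mem_filter.1 hX
  obtain ⟨hYF, hAY⟩ := mem_filter.1 hY
  refine card_inter_eq_two (h3 X hXF) (h3 Y hYF) hXY (h1 hXF hYF hXY) ?_
  exact inter_nonempty_trans h3 h1 hXF hA hYF (by rwa [inter_comm]) hAY

lemma disjoint_sup_filter {F : Finset (Finset α)} (h3 : ∀ A ∈ F, #A = 3)
    (h1 : (F : Set (Finset α)).Pairwise fun A B => #(A ∩ B) ≠ 1) {A X : Finset α} (hA : A ∈ F)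
    (hX : X ∈ F) (hAX : ¬ (A ∩ X).Nonempty) :
    Disjoint X ((F.filter fun B => (A ∩ B).Nonempty).sup id) := by
  refine Finset.disjoint_sup_right.2 fun Y hY => disjoint_iff_inter_eq_empty.2 ?_
  obtain ⟨hYF, hAY⟩ := mem_filter.1 hY
  by_contra hXY
  exact hAX (inter_nonempty_trans h3 h1 hA hYF hX hAY
    (by rw [inter_comm]; exact nonempty_iff_ne_empty.2 hXY))

theorem card_add_c_le_of_subset_powersetCard {S : Finset α} {F : Finset (Finset α)}
    (hF : F ⊆ S.powersetCard 3)
    (h1 : (F : Set (Finset α)).Pairwise fun A B => #(A ∩ B) ≠ 1) : #F + c #S ≤ #S := by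
  induction F using Finset.strongInduction generalizing S with
  | H F ih =>
  obtain rfl | ⟨A, hA⟩ := F.eq_empty_or_nonempty
  · simpa using c_le_self #S
  have h3 : ∀ B ∈ F, #B = 3 := fun B hB => (mem_powersetCard.1 (hF hB)).2
  set C := F.filter fun B => (A ∩ B).Nonempty
  set U := C.sup id
  have hAC : A ∈ C := mem_filter.2 ⟨hA, by simpa using card_pos.1 (by rw [h3 A hA]; omega)⟩
  have hUS : U ⊆ S := Finset.sup_le fun X hX => (mem_powersetCard.1 (hF (filter_subset _ _ hX))).1
  have hrest : F.filter (fun B => ¬ (A ∩ B).Nonempty) ⊆ (S \ U).powersetCard 3 := by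
    intro X hX
    obtain ⟨hXF, hAX⟩ := mem_filter.1 hX
    exact mem_powersetCard.2 ⟨subset_sdiff.2 ⟨(mem_powersetCard.1 (hF hXF)).1,
      disjoint_sup_filter h3 h1 hA hXF hAX⟩, h3 X hXF⟩
  have hrest_card := ih _ (filter_ssubset.2 ⟨A, hA, not_not.2 (mem_filter.1 hAC).2⟩) hrest
    (h1.mono (coe_subset.2 (filter_subset _ _)))
  have hsplit : #C + #(F.filter fun B => ¬ (A ∩ B).Nonempty) = #F :=
    card_filter_add_card_filter_not _
  rw [card_sdiff_of_subset hUS] at hrest_card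
  have hUS' := card_le_card hUS
  have hcomp : #C + 2 ≤ #U ∨ (#U = 4 ∧ #C ≤ 4) :=
    card_add_two_le_card_sup_or_card_sup_eq_four ⟨A, hAC⟩
      (fun X hX => h3 X (filter_subset _ _ hX)) (pairwise_card_inter_eq_two_filter h3 h1 hA)
  rcases hcomp with hdef | ⟨hU4, hC4⟩
  · have := c_le_two #S
    omega
  · have := c_add_four (#S - 4)
    rw [Nat.sub_add_cancel (hU4 ▸ hUS')] at this
    rw [hU4] at hrest_card
    omega

theorem exists_subset_powersetCard_card_eq_sub_c (S : Finset α) :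
    ∃ F ⊆ S.powersetCard 3, ((F : Set (Finset α)).Pairwise fun A B => #(A ∩ B) ≠ 1) ∧
      #F = #S - c #S := by
  induction S using Finset.strongInduction with
  | H S ih =>
  obtain hS | hS := lt_or_ge #S 4
  · by_cases hS3 : #S = 3
    · exact ⟨{S}, by simp [hS3], by simp, by simp [hS3, c]⟩
    · refine ⟨∅, empty_subset _, by simp, ?_⟩
      unfold c
      split_ifs <;> simp <;> omega
  obtain ⟨T, hTS, hT⟩ := exists_subset_card_eq hS
  obtain ⟨F, hF, h1, hcard⟩ := ih (S \ T) (sdiff_ssubset hTS (card_pos.1 (by omega)))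
  have hdisj : ∀ A ∈ F, ∀ B ⊆ T, Disjoint A B := fun A hA B hB =>
    disjoint_of_subset_left (mem_powersetCard.1 (hF hA)).1
      (disjoint_of_subset_right hB sdiff_disjoint)
  refine ⟨F ∪ T.powersetCard 3, union_subset (hF.trans (powersetCard_mono sdiff_subset))
    (powersetCard_mono hTS), ?_, ?_⟩
  · rw [coe_union, Set.pairwise_union]
    refine ⟨h1, fun A hA B hB _ => ?_, fun A hA B hB _ => ?_⟩
    · rw [mem_coe, mem_powersetCard] at hA hB
      have := card_union_add_card_inter A B
      have := card_le_card (union_subset hA.1 hB.1)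
      omega
    · have hAB := disjoint_iff_inter_eq_empty.1 (hdisj A hA B (mem_powersetCard.1 hB).1)
      simp [hAB, inter_comm B A]
  · have hFT : Disjoint F (T.powersetCard 3) := disjoint_left.2 fun A hAF hAT => by
      have hA := mem_powersetCard.1 hAT
      have := (disjoint_self_iff_empty A).1 (hdisj A hAF A hA.1)
      simp [this] at hA
    have hc := c_add_four (#S - 4)
    rw [Nat.sub_add_cancel hS] at hc
    have := c_le_self (#S - 4)
    rw [card_union_of_disjoint hFT, hcard, card_powersetCard, hT, card_sdiff_of_subset hTS, hT]
    have : Nat.choose 4 3 = 4 := rfl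
    omega

end Triples

namespace NagyVert

variable {n : ℕ}

def support (u : NagyVert n) : Finset (Fin n) := univ.filter fun i => u.1 i ≠ 0

lemma card_support (u : NagyVert n) : #u.support = 3 := u.2.2

lemma val_eq_ite (u : NagyVert n) (i : Fin n) : u.1 i = if i ∈ u.support then 1 else 0 := by
  rcases u.2.1 i with h | h <;> simp [support, h]

lemma support_injective : Function.Injective (support (n := n)) := fun u v h =>
  Subtype.ext (funext fun i => by rw [val_eq_ite u, val_eq_ite v, h])

lemma exists_support_eq {A : Finset (Fin n)} (hA : #A = 3) : ∃ u : NagyVert n, u.support = A := by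
  have hsupp : (univ.filter fun i => (if i ∈ A then (1 : ℤ) else 0) ≠ 0) = A := by ext; simp
  exact ⟨⟨fun i => if i ∈ A then 1 else 0, fun i => by by_cases i ∈ A <;> simp [*],
    by rw [hsupp]; exact hA⟩, hsupp⟩

lemma exists_image_support_eq {F : Finset (Finset (Fin n))} (hF : ∀ A ∈ F, #A = 3) :
    ∃ S : Finset (NagyVert n), S.image support = F := by
  obtain ⟨S, -, hS⟩ := subset_set_image_iff.1 fun A hA =>
    (exists_support_eq (hF A hA)).imp fun u hu => ⟨Set.mem_univ u, hu⟩
  exact ⟨S, hS⟩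

lemma sum_mul_eq_card_inter (u v : NagyVert n) :
    ∑ i, u.1 i * v.1 i = #(u.support ∩ v.support) := by
  simp only [val_eq_ite u, val_eq_ite v, mul_ite, mul_one, mul_zero, ← ite_and,
    and_comm (a := _ ∈ v.support), ← mem_inter, sum_boole, filter_mem_eq_inter, univ_inter]

lemma isIndep_iff (s : Set (NagyVert n)) :
    IsIndep (NagyG n) s ↔ (support '' s).Pairwise fun A B => #(A ∩ B) ≠ 1 := by
  rw [support_injective.injOn.pairwise_image]
  simp only [IsIndep, NagyG, sum_mul_eq_card_inter, Nat.cast_eq_one]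
  exact ⟨fun h u hu v hv huv hc => h hu hv huv ⟨huv, hc⟩,
    fun h u hu v hv huv hc => h hu hv huv hc.2⟩

end NagyVert

open NagyVert in
/-- Nagy's lemma: `α(G'_n) = n - c(n)`. -/
theorem nagy_lemma (n : ℕ) :
    IsGreatest {k | ∃ S : Finset (NagyVert n), IsIndep (NagyG n) ↑S ∧ S.card = k}
      (n - c n) := by
  constructor
  · obtain ⟨F, hF, h1, hcard⟩ :=
      exists_subset_powersetCard_card_eq_sub_c (univ : Finset (Fin n))
    obtain ⟨S, rfl⟩ := exists_image_support_eq fun A hA => (mem_powersetCard.1 (hF hA)).2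
    refine ⟨S, (isIndep_iff _).2 (by rwa [← coe_image]), ?_⟩
    rw [← card_image_of_injective S support_injective, hcard, card_univ, Fintype.card_fin]
  · rintro k ⟨S, hS, rfl⟩
    have hF : S.image support ⊆ (univ : Finset (Fin n)).powersetCard 3 := fun A hA => by
      obtain ⟨u, -, rfl⟩ := mem_image.1 hA
      exact mem_powersetCard.2 ⟨subset_univ _, u.card_support⟩
    have := card_add_c_le_of_subset_powersetCard hF
      (by rw [coe_image]; exact (isIndep_iff _).1 hS)
    rw [card_image_of_injective S support_injective, card_univ, Fintype.card_fin] at this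
    omega
end

section
/- A family of 3-element subsets of {1,…,n} in which no two sets intersect in exactly one element, viewed as the independent sets of the Nagy graph G'_n, has size at most n when n ≡ 0 (mod 4); more precisely at most n − c(n) with c(n) as defined. -/
open Finset

namespace Nagy

variable {α : Type*} [DecidableEq α]

lemma card_inter_lt_of_ne {s t : Finset α} {k : ℕ} (hs : s.card = k) (ht : t.card = k)
    (hst : s ≠ t) : (s ∩ t).card < k := by
  by_contra! h
  have hs' : s ∩ t = s := eq_of_subset_of_card_le inter_subset_left (by omega)
  have ht' : s ∩ t = t := eq_of_subset_of_card_le inter_subset_right (by omega)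
  exact hst (hs'.symm.trans ht')

lemma inter_nonempty_of_card_lt {s t u : Finset α}
    (h : t.card < (s ∩ t).card + (t ∩ u).card) : (s ∩ u).Nonempty :=
  (inter_nonempty_of_card_lt_card_add_card inter_subset_right inter_subset_left h).mono
    fun _ hx => by simp only [mem_inter] at hx ⊢; exact ⟨hx.1.1, hx.2.2⟩

lemma subset_union_of_not_inter_subset {k : ℕ} {s t v : Finset α} (hv : v.card = k + 1)
    (hs : (v ∩ s).card = k) (ht : (v ∩ t).card = k) (hst : (s ∩ t).card = k)
    (hnot : ¬ s ∩ t ⊆ v) : v ⊆ s ∪ t := by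
  have hsum := card_union_add_card_inter (v ∩ s) (v ∩ t)
  rw [← inter_union_distrib_left, ← inter_inter_distrib_left, hs, ht] at hsum
  have hlt : (v ∩ (s ∩ t)).card < (s ∩ t).card :=
    card_lt_card ⟨inter_subset_right, fun h => hnot (h.trans inter_subset_left)⟩
  exact inter_eq_left.mp (eq_of_subset_of_card_le inter_subset_left (by omega))

lemma forall_inter_subset_or_forall_subset_union {k : ℕ} {C : Finset (Finset α)}
    (hcard : ∀ v ∈ C, v.card = k + 1)
    (hinter : ∀ v ∈ C, ∀ w ∈ C, v ≠ w → (v ∩ w).card = k)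
    {s t : Finset α} (hs : s ∈ C) (ht : t ∈ C) (hst : s ≠ t) :
    (∀ v ∈ C, s ∩ t ⊆ v) ∨ ∀ v ∈ C, v ⊆ s ∪ t := by
  have hK : (s ∩ t).card = k := hinter s hs t ht hst
  have houtside : ∀ v ∈ C, ¬ s ∩ t ⊆ v → v ⊆ s ∪ t := fun v hv hnot =>
    subset_union_of_not_inter_subset (hcard v hv)
      (hinter v hv s hs fun h => hnot (h ▸ inter_subset_left))
      (hinter v hv t ht fun h => hnot (h ▸ inter_subset_right)) hK hnot
  by_contra! ⟨⟨v, hv, hKv⟩, ⟨w, hw, hwS⟩⟩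
  have hvS := houtside v hv hKv
  have hKw : s ∩ t ⊆ w := by by_contra h; exact hwS (houtside w hw h)
  -- `w` meets `s ∪ t ⊇ v` only in `s ∩ t`, so `w ∩ v ⊆ s ∩ t`; equal cardinalities then
  -- force `s ∩ t ⊆ v`.
  have hwS' : w ∩ (s ∪ t) = s ∩ t := by
    refine (eq_of_subset_of_card_le (subset_inter hKw inter_subset_union) ?_).symm
    have := card_lt_card ⟨inter_subset_left, fun h => hwS (h.trans inter_subset_right)⟩
    rw [hcard w hw] at this
    omega
  have hwv : w ∩ v = s ∩ t := by
    refine eq_of_subset_of_card_le ?_ ?_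
    · rw [← hwS']; exact inter_subset_inter_left hvS
    · rw [hK, hinter w hw v hv (by rintro rfl; exact hwS hvS)]
  exact hKv (hwv ▸ inter_subset_right)

lemma card_biUnion_of_forall_inter_eq {K : Finset α} {C : Finset (Finset α)} (hC : C.Nonempty)
    (hK : ∀ v ∈ C, K ⊆ v ∧ v.card = K.card + 1)
    (hinter : ∀ v ∈ C, ∀ w ∈ C, v ≠ w → (v ∩ w).card = K.card) :
    (C.biUnion id).card = K.card + C.card := by
  obtain ⟨v₀, hv₀⟩ := hC
  have hKU : K ⊆ C.biUnion id := (hK v₀ hv₀).1.trans (subset_biUnion_of_mem id hv₀)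
  have hdiff : C.biUnion id \ K = C.biUnion (· \ K) := by
    ext; simp [← and_assoc, exists_and_right]
  have hcard : (C.biUnion (· \ K)).card = C.card := by
    rw [card_biUnion, card_eq_sum_ones]
    · refine sum_congr rfl fun v hv => ?_
      rw [card_sdiff_of_subset (hK v hv).1, (hK v hv).2]
      omega
    · intro v hv w hw hvw
      have hvw' : v ∩ w = K := (eq_of_subset_of_card_le (subset_inter (hK v hv).1 (hK w hw).1)
        (hinter v hv w hw hvw).le).symm
      rw [Function.onFun, disjoint_left]
      intro x hxv hxw
      rw [mem_sdiff] at hxv hxw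
      exact hxv.2 (hvw' ▸ mem_inter.mpr ⟨hxv.1, hxw.1⟩)
  rw [← card_sdiff_add_card_eq_card hKU, hdiff, hcard, add_comm]

lemma card_le_card_biUnion_of_card_inter_eq_two {C : Finset (Finset α)} (hC : C.Nonempty)
    (h3 : ∀ v ∈ C, v.card = 3) (h2 : ∀ v ∈ C, ∀ w ∈ C, v ≠ w → (v ∩ w).card = 2) :
    C.card ≤ (C.biUnion id).card ∧
      ((C.biUnion id).card ≤ C.card + 1 → (C.biUnion id).card = 4) := by
  rcases le_or_gt C.card 1 with hle | hlt
  · obtain ⟨s, rfl⟩ := card_eq_one.mp (le_antisymm hle hC.card_pos)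
    simp [h3 s (mem_singleton_self s)]
  obtain ⟨s, hs, t, ht, hst⟩ := one_lt_card.mp hlt
  have hK : (s ∩ t).card = 2 := h2 s hs t ht hst
  rcases forall_inter_subset_or_forall_subset_union (k := 2) h3 h2 hs ht hst with hsub | hsub
  · have := card_biUnion_of_forall_inter_eq hC (fun v hv => ⟨hsub v hv, by rw [h3 v hv, hK]⟩)
      (hK ▸ h2)
    omega
  · have hU : C.biUnion id = s ∪ t := (biUnion_subset.mpr hsub).antisymm
      (union_subset (subset_biUnion_of_mem id hs) (subset_biUnion_of_mem id ht))
    have hS : (s ∪ t).card = 4 := by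
      have := card_union_add_card_inter s t
      rw [h3 s hs, h3 t ht, hK] at this
      omega
    have hC4 : C.card ≤ 4 := calc
      C.card ≤ ((s ∪ t).powersetCard 3).card :=
        card_le_card fun v hv => mem_powersetCard.mpr ⟨hsub v hv, h3 v hv⟩
      _ = 4 := by rw [card_powersetCard, hS]; rfl
    rw [hU, hS]
    omega

lemma two_le_card_inter_of_nonempty {F : Finset (Finset α)} (h3 : ∀ s ∈ F, s.card = 3)
    (hF : ∀ s ∈ F, ∀ t ∈ F, s ≠ t → (s ∩ t).card ≠ 1) {s t : Finset α} (hs : s ∈ F)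
    (ht : t ∈ F) (hne : (s ∩ t).Nonempty) : 2 ≤ (s ∩ t).card := by
  rcases eq_or_ne s t with rfl | hst
  · rw [inter_self, h3 s hs]; omega
  · have := hF s hs t ht hst; have := hne.card_pos; omega

lemma inter_nonempty_trans {F : Finset (Finset α)} (h3 : ∀ s ∈ F, s.card = 3)
    (hF : ∀ s ∈ F, ∀ t ∈ F, s ≠ t → (s ∩ t).card ≠ 1) {s t u : Finset α} (hs : s ∈ F)
    (ht : t ∈ F) (hu : u ∈ F) (hst : (s ∩ t).Nonempty) (htu : (t ∩ u).Nonempty) :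
    (s ∩ u).Nonempty := by
  refine inter_nonempty_of_card_lt (t := t) ?_
  have := two_le_card_inter_of_nonempty h3 hF hs ht hst
  have := two_le_card_inter_of_nonempty h3 hF ht hu htu
  rw [h3 t ht]
  omega

theorem card_le_card_biUnion_and_four_dvd (F : Finset (Finset α)) (h3 : ∀ s ∈ F, s.card = 3)
    (hF : ∀ s ∈ F, ∀ t ∈ F, s ≠ t → (s ∩ t).card ≠ 1) :
    F.card ≤ (F.biUnion id).card ∧
      ((F.biUnion id).card ≤ F.card + 1 → 4 ∣ (F.biUnion id).card) := by
  induction F using strongInduction with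
  | H F ih =>
  rcases F.eq_empty_or_nonempty with rfl | ⟨s₀, hs₀⟩
  · simp
  set C := F.filter fun t => (s₀ ∩ t).Nonempty
  set F' := F.filter fun t => ¬ (s₀ ∩ t).Nonempty
  have hC2 : ∀ u ∈ C, ∀ v ∈ C, u ≠ v → (u ∩ v).card = 2 := by
    simp only [C, mem_filter]
    intro u hu v hv huv
    have := two_le_card_inter_of_nonempty h3 hF hu.1 hv.1
      (inter_nonempty_trans h3 hF hu.1 hs₀ hv.1 (inter_comm u s₀ ▸ hu.2) hv.2)
    have := card_inter_lt_of_ne (h3 u hu.1) (h3 v hv.1) huv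
    omega
  have hdisj : Disjoint (C.biUnion id) (F'.biUnion id) := by
    refine (disjoint_biUnion_left _ _ _).mpr fun u hu => (disjoint_biUnion_right _ _ _).mpr
      fun w hw => not_not.mp fun huw => ?_
    simp only [C, F', mem_filter] at hu hw
    exact hw.2 (inter_nonempty_trans h3 hF hs₀ hu.1 hw.1 hu.2
      (not_disjoint_iff_nonempty_inter.mp huw))
  have hs₀s₀ : (s₀ ∩ s₀).Nonempty := by rw [inter_self, ← card_pos, h3 s₀ hs₀]; omega
  have hF' : F' ⊂ F := filter_ssubset.mpr ⟨s₀, hs₀, not_not.mpr hs₀s₀⟩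
  obtain ⟨hC_le, hC_four⟩ := card_le_card_biUnion_of_card_inter_eq_two (C := C)
    ⟨s₀, mem_filter.mpr ⟨hs₀, hs₀s₀⟩⟩ (fun s hs => h3 s (filter_subset _ _ hs)) hC2
  obtain ⟨hF'_le, hF'_dvd⟩ := ih F' hF' (fun s hs => h3 s (filter_subset _ _ hs))
    (fun s hs t ht => hF s (filter_subset _ _ hs) t (filter_subset _ _ ht))
  have hcard : C.card + F'.card = F.card := card_filter_add_card_filter_not _
  have hsupp : (F.biUnion id).card = (C.biUnion id).card + (F'.biUnion id).card := by
    rw [← card_union_of_disjoint hdisj, ← union_biUnion, filter_union_filter_not_eq]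
  refine ⟨by omega, fun h => ?_⟩
  have := hC_four (by omega)
  have := hF'_dvd (by omega)
  omega

lemma le_sub_c_of_le_of_four_dvd {m u n : ℕ} (hmu : m ≤ u) (hun : u ≤ n)
    (hdvd : u ≤ m + 1 → 4 ∣ u) : m ≤ n - c n := by
  unfold c
  split_ifs <;> omega

end Nagy

/-- A family of `3`-element subsets of `{1, …, n}` in which no two distinct sets
intersect in exactly one element has size at most `n - c(n)`; in particular at most
`n` when `n ≡ 0 (mod 4)`. -/
theorem nagy_upper (n : ℕ) (F : Finset (Finset (Fin n)))
    (h3 : ∀ s ∈ F, s.card = 3)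
    (hindep : ∀ s ∈ F, ∀ t ∈ F, s ≠ t → (s ∩ t).card ≠ 1) :
    (n % 4 = 0 → F.card ≤ n) ∧ F.card ≤ n - c n := by
  obtain ⟨hle, hdvd⟩ := Nagy.card_le_card_biUnion_and_four_dvd F h3 hindep
  have hn : (F.biUnion id).card ≤ n := by simpa using card_le_univ (F.biUnion id)
  exact ⟨fun _ => hle.trans hn, Nagy.le_sub_c_of_le_of_four_dvd hle hn hdvd⟩
end

section
/- In G_n, any support (3-element set of coordinate positions) contains at most 4 pairwise non-adjacent vertices: among the 8 sign patterns on a fixed support, an independent set contains at most 4 vectors. -/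
namespace Gvert

variable {n : ℕ}

def support (v : Gvert n) : Finset (Fin n) :=
  Finset.univ.filter fun i => v.1 i ≠ 0

@[simp]
theorem mem_support {v : Gvert n} {i : Fin n} : i ∈ v.support ↔ v.1 i ≠ 0 := by
  simp [support]

theorem apply_eq_zero {v : Gvert n} {i : Fin n} (hi : i ∉ v.support) : v.1 i = 0 := by
  simpa using hi

theorem card_support (v : Gvert n) : v.support.card = 3 := v.2.2

theorem eq_neg_one_or_eq_one {v : Gvert n} {i : Fin n} (hi : v.1 i ≠ 0) :
    v.1 i = -1 ∨ v.1 i = 1 := by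
  rcases v.2.1 i with h | h | h <;> simp_all

theorem apply_mul_self_eq_one {v : Gvert n} {i : Fin n} (hi : v.1 i ≠ 0) : v.1 i * v.1 i = 1 := by
  rcases eq_neg_one_or_eq_one hi with h | h <;> simp [h]

theorem apply_mul_apply_eq_neg_one {u v : Gvert n} {i : Fin n} (hu : u.1 i ≠ 0) (hv : v.1 i ≠ 0)
    (hne : u.1 i ≠ v.1 i) : u.1 i * v.1 i = -1 := by
  rcases eq_neg_one_or_eq_one hu with h | h <;> rcases eq_neg_one_or_eq_one hv with h' | h' <;>
    simp_all

theorem adj_of_eq_off {u v : Gvert n} {x : Fin n} (hu : u.1 x ≠ 0) (hv : v.1 x ≠ 0)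
    (hne : u.1 x ≠ v.1 x) (heq : ∀ i ≠ x, u.1 i = v.1 i) : (G n).Adj u v := by
  refine ⟨fun h => hne (by rw [h]), ?_⟩
  have hx : x ∈ v.support := mem_support.mpr hv
  have hsum : ∑ i, u.1 i * v.1 i = ∑ i ∈ v.support, u.1 i * v.1 i :=
    (Finset.sum_subset (Finset.subset_univ _) fun i _ hi => by
      rw [apply_eq_zero hi, mul_zero]).symm
  have herase : ∑ i ∈ v.support.erase x, u.1 i * v.1 i = 2 := by
    rw [Finset.sum_congr rfl fun i hi => by
      rw [heq i (Finset.ne_of_mem_erase hi), apply_mul_self_eq_one (mem_support.mp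
        (Finset.mem_of_mem_erase hi))]]
    simp [Finset.card_erase_of_mem hx, card_support]
  rw [hsum, ← Finset.add_sum_erase _ _ hx, herase, apply_mul_apply_eq_neg_one hu hv hne]
  norm_num

end Gvert

namespace IsIndep

variable {n : ℕ} {S : Set (Gvert n)}

theorem eq_of_eq_off (hS : IsIndep (G n) S)
    {u v : Gvert n} (hu : u ∈ S) (hv : v ∈ S) {x : Fin n} (hux : u.1 x ≠ 0) (hvx : v.1 x ≠ 0)
    (heq : ∀ i ≠ x, u.1 i = v.1 i) : u = v := by
  by_contra huv
  by_cases hx : u.1 x = v.1 x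
  · refine huv (Subtype.ext (funext fun i => ?_))
    by_cases hi : i = x
    · rw [hi, hx]
    · exact heq i hi
  · exact hS hu hv huv (Gvert.adj_of_eq_off hux hvx hx heq)

theorem injOn_apply_apply (hS : IsIndep (G n) S) {x y z : Fin n} :
    Set.InjOn (fun v : Gvert n => (v.1 y, v.1 z)) {v ∈ S | v.support = {x, y, z}} := by
  intro u ⟨huS, hub⟩ v ⟨hvS, hvb⟩ huv
  obtain ⟨hy, hz⟩ := Prod.mk.inj huv
  have hux : u.1 x ≠ 0 := Gvert.mem_support.mp (hub ▸ by simp)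
  have hvx : v.1 x ≠ 0 := Gvert.mem_support.mp (hvb ▸ by simp)
  refine hS.eq_of_eq_off huS hvS hux hvx fun i hix => ?_
  by_cases hiy : i = y
  · rwa [hiy]
  by_cases hiz : i = z
  · rwa [hiz]
  have hi : i ∉ ({x, y, z} : Finset (Fin n)) := by simp [hix, hiy, hiz]
  rw [Gvert.apply_eq_zero (hub ▸ hi), Gvert.apply_eq_zero (hvb ▸ hi)]

end IsIndep

/-- In `G_n` any fixed support (`3`-element set of coordinate positions) carries at
most `4` vertices of an independent set. -/
theorem indep_support_le_four (n : ℕ) (S : Finset (Gvert n))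
    (hS : IsIndep (G n) ↑S) (b : Finset (Fin n)) :
    (S.filter fun v => (Finset.univ.filter fun i => v.1 i ≠ 0) = b).card ≤ 4 := by
  change (S.filter fun v => v.support = b).card ≤ 4
  rcases (S.filter fun v => v.support = b).eq_empty_or_nonempty with hT | ⟨w, hw⟩
  · simp [hT]
  obtain ⟨x, y, z, -, -, -, rfl⟩ :=
    Finset.card_eq_three.mp ((Finset.mem_filter.mp hw).2 ▸ w.card_support)
  calc _ ≤ (({-1, 1} ×ˢ {-1, 1}) : Finset (ℤ × ℤ)).card := by
        refine Finset.card_le_card_of_injOn (fun v => (v.1 y, v.1 z)) (fun v hv => ?_) ?_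
        · have hvb := (Finset.mem_filter.mp hv).2
          simpa using ⟨Gvert.eq_neg_one_or_eq_one (Gvert.mem_support.mp (hvb ▸ by simp)),
            Gvert.eq_neg_one_or_eq_one (Gvert.mem_support.mp (hvb ▸ by simp))⟩
        · rw [Finset.coe_filter]
          exact hS.injOn_apply_apply
    _ = 4 := by decide
end
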